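/- For an odd prime p, the group presented by ⟨a, b | a^p, b^p, [[a,b],a], [[a,b],b]⟩ has order p³. -/

import Mathlib

/-- The commutator `[x, y] = x⁻¹y⁻¹xy`. -/
def comm' {G : Type*} [Group G] (x y : G) : G := x⁻¹ * y⁻¹ * x * y

/-- The relations of the group `B_p = ⟨a, b | a^p, b^p, [[a,b],a], [[a,b],b]⟩`. -/
def BpRels (p : ℕ) : Set (FreeGroup (Fin 2)) :=
  {FreeGroup.of 0 ^ p, FreeGroup.of 1 ^ p,
   comm' (comm' (FreeGroup.of 0) (FreeGroup.of 1)) (FreeGroup.of 0),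
   comm' (comm' (FreeGroup.of 0) (FreeGroup.of 1)) (FreeGroup.of 1)}

/-!
Write `a`, `b` for the generators and `c = comm' a b`, so that `a * b = b * a * c`. The relations
make `c` central, hence `b ^ y * a ^ x = a ^ x * b ^ y * c⁻¹ ^ (x * y)`, and `b ^ p = 1` then forces
`c ^ p = 1`. So `⟨x, y, z⟩ ↦ a ^ x * b ^ y * c ^ z` is a homomorphism from the Heisenberg group over
`ZMod p`, and it is inverse to the map sending `a`, `b` to the standard generators `⟨1, 0, 0⟩`,
`⟨0, 1, 0⟩`. The Heisenberg group has `p ^ 3` elements.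
-/

section CentralCommutator

variable {G : Type*} [Group G]

theorem comm'_eq_one_iff {x y : G} : comm' x y = 1 ↔ Commute x y := by
  rw [comm', show x⁻¹ * y⁻¹ * x * y = (y * x)⁻¹ * (x * y) by group, inv_mul_eq_one]
  exact ⟨Eq.symm, Eq.symm⟩

theorem map_comm' {H : Type*} [Group H] (f : G →* H) (x y : G) :
    f (comm' x y) = comm' (f x) (f y) := by
  simp only [comm', map_mul, map_inv]

theorem mul_eq_mul_mul_comm' (x y : G) : x * y = y * x * comm' x y := by
  rw [comm']; group

variable {a b c : G}

theorem inv_pow_mul_mul_pow (hab : a * b = b * a * c) (hca : Commute c a) (n : ℕ) :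
    (a ^ n)⁻¹ * b * a ^ n = b * (c ^ n)⁻¹ := by
  have hba : b * a = a * b * c⁻¹ := by rw [hab]; group
  induction n with
  | zero => simp
  | succ n ih =>
    calc (a ^ (n + 1))⁻¹ * b * a ^ (n + 1) = a⁻¹ * ((a ^ n)⁻¹ * b * a ^ n) * a := by group
      _ = a⁻¹ * (b * a) * (c ^ n)⁻¹ := by
        rw [ih, mul_assoc, mul_assoc b, ((hca.pow_left n).inv_left).eq]; group
      _ = b * (c ^ (n + 1))⁻¹ := by
        rw [hba, pow_succ, mul_inv_rev]; group

theorem pow_mul_pow_swap (hab : a * b = b * a * c) (hca : Commute c a) (hcb : Commute c b)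
    (m n : ℕ) : b ^ m * a ^ n = a ^ n * b ^ m * (c ^ (m * n))⁻¹ := by
  have hconj : (a ^ n)⁻¹ * b ^ m * a ^ n = b ^ m * (c ^ (m * n))⁻¹ := by
    rw [show (a ^ n)⁻¹ * b ^ m * a ^ n = ((a ^ n)⁻¹ * b * a ^ n) ^ m by
        simpa only [inv_inv] using (conj_pow (a := (a ^ n)⁻¹) (b := b) (i := m)).symm,
      inv_pow_mul_mul_pow hab hca, (hcb.pow_left n).inv_left.symm.mul_pow, ← inv_pow,
      ← pow_mul, mul_comm, inv_pow]
  rw [mul_assoc, ← hconj]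
  group

theorem pow_eq_one_of_mul_eq_mul_mul {p : ℕ} (hab : a * b = b * a * c) (hca : Commute c a)
    (hcb : Commute c b) (hb : b ^ p = 1) : c ^ p = 1 := by
  simpa [hb] using pow_mul_pow_swap hab hca hcb p 1

theorem normalForm_mul_normalForm (hab : a * b = b * a * c) (hca : Commute c a)
    (hcb : Commute c b) (i j k i' j' k' : ℕ) :
    a ^ i * b ^ j * c ^ k * (a ^ i' * b ^ j' * c ^ k') =
      a ^ i * a ^ i' * (b ^ j * b ^ j') * (c ^ k * c ^ k' * (c ^ (j * i'))⁻¹) := by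
  calc a ^ i * b ^ j * c ^ k * (a ^ i' * b ^ j' * c ^ k')
      = a ^ i * b ^ j * (c ^ k * (a ^ i' * b ^ j')) * c ^ k' := by group
    _ = a ^ i * (b ^ j * a ^ i') * b ^ j' * (c ^ k * c ^ k') := by
        rw [((hca.pow_pow k i').mul_right (hcb.pow_pow k j')).eq]; group
    _ = a ^ i * a ^ i' * b ^ j * ((c ^ (j * i'))⁻¹ * b ^ j') * (c ^ k * c ^ k') := by
        rw [pow_mul_pow_swap hab hca hcb]; group
    _ = a ^ i * a ^ i' * (b ^ j * b ^ j') * ((c ^ (j * i'))⁻¹ * (c ^ k * c ^ k')) := by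
        rw [(hcb.pow_pow _ j').inv_left.eq]; group
    _ = a ^ i * a ^ i' * (b ^ j * b ^ j') * (c ^ k * c ^ k' * (c ^ (j * i'))⁻¹) := by
        rw [((Commute.pow_pow_self c _ _).mul_right (Commute.pow_pow_self c _ _)).inv_left.eq]

end CentralCommutator

section ZModPow

variable {M : Type*} [Monoid M] {p : ℕ} {g : M}

theorem pow_val_add [NeZero p] (hg : g ^ p = 1) (m n : ZMod p) :
    g ^ (m + n).val = g ^ m.val * g ^ n.val := by
  rw [ZMod.val_add, ← pow_eq_pow_mod _ hg, pow_add]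

theorem pow_val_mul (hg : g ^ p = 1) (m n : ZMod p) :
    g ^ (m * n).val = g ^ (m.val * n.val) := by
  rw [ZMod.val_mul, ← pow_eq_pow_mod _ hg]

theorem pow_val_one (hg : g ^ p = 1) : g ^ (1 : ZMod p).val = g := by
  rw [ZMod.val_one_eq_one_mod, ← pow_eq_pow_mod _ hg, pow_one]

theorem pow_val_sub {G : Type*} [Group G] [NeZero p] {g : G} (hg : g ^ p = 1) (m n : ZMod p) :
    g ^ (m - n).val = g ^ m.val * (g ^ n.val)⁻¹ :=
  eq_mul_inv_of_mul_eq (by rw [← pow_val_add hg, sub_add_cancel])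

end ZModPow

/-- `⟨x, y, z⟩` stands for `a ^ x * b ^ y * c ^ z`, where `a * b = b * a * c` and `c` is central:
this forces the multiplication law below. -/
@[ext]
structure Heisenberg (p : ℕ) where
  x : ZMod p
  y : ZMod p
  z : ZMod p

namespace Heisenberg

variable {p : ℕ}

instance : Mul (Heisenberg p) := ⟨fun g h => ⟨g.x + h.x, g.y + h.y, g.z + h.z - g.y * h.x⟩⟩

instance : One (Heisenberg p) := ⟨⟨0, 0, 0⟩⟩

instance : Inv (Heisenberg p) := ⟨fun g => ⟨-g.x, -g.y, -g.z - g.y * g.x⟩⟩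

@[simp] theorem mul_x (g h : Heisenberg p) : (g * h).x = g.x + h.x := rfl
@[simp] theorem mul_y (g h : Heisenberg p) : (g * h).y = g.y + h.y := rfl
@[simp] theorem mul_z (g h : Heisenberg p) : (g * h).z = g.z + h.z - g.y * h.x := rfl
@[simp] theorem inv_x (g : Heisenberg p) : g⁻¹.x = -g.x := rfl
@[simp] theorem inv_y (g : Heisenberg p) : g⁻¹.y = -g.y := rfl
@[simp] theorem inv_z (g : Heisenberg p) : g⁻¹.z = -g.z - g.y * g.x := rfl
@[simp] theorem one_x : (1 : Heisenberg p).x = 0 := rfl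
@[simp] theorem one_y : (1 : Heisenberg p).y = 0 := rfl
@[simp] theorem one_z : (1 : Heisenberg p).z = 0 := rfl
@[simp] theorem mk_zero_zero_zero : (⟨0, 0, 0⟩ : Heisenberg p) = 1 := rfl

instance : Group (Heisenberg p) where
  mul_assoc _ _ _ := by ext <;> simp <;> ring
  one_mul _ := by ext <;> simp
  mul_one _ := by ext <;> simp
  inv_mul_cancel _ := by ext <;> simp; ring

def equivProd : Heisenberg p ≃ ZMod p × ZMod p × ZMod p where
  toFun g := (g.x, g.y, g.z)
  invFun t := ⟨t.1, t.2.1, t.2.2⟩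

theorem card : Nat.card (Heisenberg p) = p ^ 3 := by
  rw [Nat.card_congr equivProd, Nat.card_prod, Nat.card_prod, Nat.card_zmod]
  ring

def a : Heisenberg p := ⟨1, 0, 0⟩

def b : Heisenberg p := ⟨0, 1, 0⟩

theorem comm'_a_b : comm' (a : Heisenberg p) b = ⟨0, 0, 1⟩ := by
  ext <;> simp [comm', a, b]

theorem commute_comm'_a_b (g : Heisenberg p) : Commute (comm' a b) g := by
  rw [comm'_a_b]
  ext <;> simp [add_comm]

theorem a_pow (n : ℕ) : (a : Heisenberg p) ^ n = ⟨n, 0, 0⟩ := by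
  induction n with
  | zero => ext <;> simp
  | succ n ih => rw [pow_succ, ih]; ext <;> simp [a]

theorem b_pow (n : ℕ) : (b : Heisenberg p) ^ n = ⟨0, n, 0⟩ := by
  induction n with
  | zero => ext <;> simp
  | succ n ih => rw [pow_succ, ih]; ext <;> simp [b]

theorem comm'_a_b_pow (n : ℕ) : comm' (a : Heisenberg p) b ^ n = ⟨0, 0, n⟩ := by
  induction n with
  | zero => ext <;> simp
  | succ n ih => rw [pow_succ, ih]; ext <;> simp [comm'_a_b]

theorem a_pow_mul_b_pow_mul_comm'_pow [NeZero p] (g : Heisenberg p) :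
    a ^ g.x.val * b ^ g.y.val * comm' a b ^ g.z.val = g := by
  ext <;> simp [a_pow, b_pow, comm'_a_b_pow]

section Lift

variable {G : Type*} [Group G] {a b c : G} [NeZero p]

def lift (hab : a * b = b * a * c) (hca : Commute c a) (hcb : Commute c b) (ha : a ^ p = 1)
    (hb : b ^ p = 1) : Heisenberg p →* G where
  toFun g := a ^ g.x.val * b ^ g.y.val * c ^ g.z.val
  map_one' := by simp
  map_mul' g h := by
    have hc := pow_eq_one_of_mul_eq_mul_mul hab hca hcb hb
    simp only [mul_x, mul_y, mul_z, pow_val_add ha, pow_val_add hb, pow_val_sub hc,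
      pow_val_add hc, pow_val_mul hc]
    exact (normalForm_mul_normalForm hab hca hcb ..).symm

end Lift

end Heisenberg

@[simp]
theorem PresentedGroup.mk_of {α : Type*} {rels : Set (FreeGroup α)} (x : α) :
    PresentedGroup.mk rels (FreeGroup.of x) = PresentedGroup.of x :=
  rfl

section Presentation

variable {G : Type*} [Group G] {p : ℕ}

theorem forall_bpRels_iff (f : FreeGroup (Fin 2) →* G) :
    (∀ r ∈ BpRels p, f r = 1) ↔
      f (.of 0) ^ p = 1 ∧ f (.of 1) ^ p = 1 ∧
        Commute (comm' (f (.of 0)) (f (.of 1))) (f (.of 0)) ∧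
        Commute (comm' (f (.of 0)) (f (.of 1))) (f (.of 1)) := by
  simp only [BpRels, Set.mem_insert_iff, Set.mem_singleton_iff, forall_eq_or_imp, forall_eq,
    map_pow, map_comm', comm'_eq_one_iff]

variable (p)

def toHeisenberg : PresentedGroup (BpRels p) →* Heisenberg p :=
  PresentedGroup.toGroup (f := ![Heisenberg.a, Heisenberg.b]) <| (forall_bpRels_iff _).2 <| by
    simp [Heisenberg.a_pow, Heisenberg.b_pow, Heisenberg.commute_comm'_a_b]

variable [NeZero p]

def equivHeisenberg : PresentedGroup (BpRels p) ≃* Heisenberg p :=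
  have rels := (forall_bpRels_iff (PresentedGroup.mk (BpRels p))).1 fun _ ↦
    PresentedGroup.one_of_mem
  (toHeisenberg p).toMulEquiv
    (Heisenberg.lift (mul_eq_mul_mul_comm' _ _) rels.2.2.1 rels.2.2.2 rels.1 rels.2.1)
    (PresentedGroup.ext fun i ↦ by
      fin_cases i
      · simp [toHeisenberg, Heisenberg.lift, Heisenberg.a,
          pow_val_one (g := PresentedGroup.of 0) rels.1]
      · simp [toHeisenberg, Heisenberg.lift, Heisenberg.b,
          pow_val_one (g := PresentedGroup.of 1) rels.2.1])
    (MonoidHom.ext fun g ↦ by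
      simp [toHeisenberg, Heisenberg.lift, map_comm', Heisenberg.a_pow_mul_b_pow_mul_comm'_pow])

theorem card_presentedGroup_bpRels : Nat.card (PresentedGroup (BpRels p)) = p ^ 3 := by
  rw [Nat.card_congr (equivHeisenberg p).toEquiv, Heisenberg.card]

end Presentation

theorem stmt_8_general (p : ℕ) (hp : p.Prime) :
    Nat.card (PresentedGroup (BpRels p)) = p ^ 3 :=
  have : NeZero p := ⟨hp.ne_zero⟩
  card_presentedGroup_bpRels p

theorem stmt_8 (p : ℕ) (hp : p.Prime) (hodd : Odd p) :
    Nat.card (PresentedGroup (BpRels p)) = p ^ 3 :=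
  stmt_8_general p hp
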